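/- For a nonlinear stability function Z_t(x) = a_t·x + i b_t·x with corresponding path γ_Z(t) = t·b_t − a_t: if γ_Z(t₀) ∈ D(M) (equivalently, M is Z_{t₀}-semistable with μ_{t₀}(M)=t₀), then the expressions 1 − d/dt μ_t(M)|_{t=t₀} and v(t₀)·dim M have the same sign, where v = dγ_Z/dt. In particular, the crossing of the hyperplane H(M) is transverse iff d/dt μ_t(M)|_{t=t₀} ≠ 1, and the crossing is green (v(t₀)·dim M > 0) iff d/dt μ_t(M)|_{t=t₀} < 1. -/

import Mathlib

/-!
With `A t = a_t·β` and `B t = b_t·β > 0` we have `μ_t(β) = A t / B t` and `γ_Z(t)·β = t B t - A t`.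
The quotient rule together with `A t₀ = t₀ B t₀` gives
`1 - μ'(t₀) = (t B t - A t)'(t₀) / B t₀`, and dividing by the positive number `B t₀` keeps signs.
-/

open scoped BigOperators

noncomputable section

/-- Dot product of a real vector with a dimension vector. -/
def dprod {n : ℕ} (x : Fin n → ℝ) (v : Fin n → ℕ) : ℝ := ∑ i, x i * (v i : ℝ)

/-- Slope of a dimension vector with respect to a linear stability function
`Z(x) = a·x + i b·x`. -/
def zslope {n : ℕ} (a b : Fin n → ℝ) (v : Fin n → ℕ) : ℝ := dprod a v / dprod b v

/-- The semistability set `D(M)` of a module `M`, with respect to a dimension-vector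
assignment `d`. -/
def DSet {Λ : Type} [Ring Λ] {n : ℕ}
    (d : (N : Type) → [AddCommGroup N] → [Module Λ N] → Fin n → ℕ)
    (M : Type) [AddCommGroup M] [Module Λ M] : Set (Fin n → ℝ) :=
  {x | dprod x (d M) = 0 ∧ ∀ M' : Submodule Λ M, dprod x (d ↥M') ≤ 0}

/-- A module is Schurian if it is nonzero and every nonzero endomorphism is invertible,
i.e. its endomorphism ring is a division algebra. -/
def Schurian (Λ : Type) [Ring Λ] (M : Type) [AddCommGroup M] [Module Λ M] : Prop :=
  (∃ y : M, y ≠ 0) ∧ ∀ f : M →ₗ[Λ] M, f ≠ 0 → Function.Bijective f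

/-- `X` belongs to `E(M)`: `X` admits a finite filtration with all subquotients
isomorphic to `M`. -/
def IsFiltered (Λ : Type) [Ring Λ] (M : Type) [AddCommGroup M] [Module Λ M]
    (X : Type) [AddCommGroup X] [Module Λ X] : Prop :=
  ∃ (k : ℕ) (F : Fin (k + 1) → Submodule Λ X), Monotone F ∧ F 0 = ⊥ ∧ F (Fin.last k) = ⊤ ∧
    ∀ i : Fin k, Nonempty
      ((↥(F i.succ) ⧸ Submodule.comap (F i.succ).subtype (F i.castSucc)) ≃ₗ[Λ] M)

/-- Slope at time `t` of a dimension vector, for a nonlinear stability function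
`Z_t(x) = a_t·x + i b_t·x`. -/
def muZ {n : ℕ} (a b : ℝ → Fin n → ℝ) (t : ℝ) (v : Fin n → ℕ) : ℝ :=
  dprod (a t) v / dprod (b t) v

/-- `M` is `Z_t`-semistable: every nonzero submodule has zslope at least that of `M`. -/
def Semistable {Λ : Type} [Ring Λ] {n : ℕ}
    (d : (N : Type) → [AddCommGroup N] → [Module Λ N] → Fin n → ℕ)
    (a b : ℝ → Fin n → ℝ) (t : ℝ)
    (M : Type) [AddCommGroup M] [Module Λ M] : Prop :=
  ∀ M' : Submodule Λ M, M' ≠ ⊥ → muZ a b t (d M) ≤ muZ a b t (d ↥M')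

/-- The nonlinear stability function given by `(a, b)` is green (for `Λ`): at every
semistable pair `(N, t₀)` (with `N` a nonzero finite-length `Λ`-module, `N`
`Z_{t₀}`-semistable and `μ_{t₀}(N) = t₀`), the derivative of `t ↦ μ_t(N)` at `t₀`
is `< 1`. -/
def ZGreen {Λ : Type} [Ring Λ] {n : ℕ}
    (d : (N : Type) → [AddCommGroup N] → [Module Λ N] → Fin n → ℕ)
    (a b : ℝ → Fin n → ℝ) : Prop :=
  ∀ (N : Type) [AddCommGroup N] [Module Λ N] [IsNoetherian Λ N] [IsArtinian Λ N] (t₀ : ℝ),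
    (∃ y : N, y ≠ 0) → Semistable d a b t₀ N → muZ a b t₀ (d N) = t₀ →
      deriv (fun t => muZ a b t (d N)) t₀ < 1

/-- `t₀(M)`: the smallest `t` with `μ_t(M) = t` (as an infimum). -/
def tzero {n : ℕ} (a b : ℝ → Fin n → ℝ) (v : Fin n → ℕ) : ℝ := sInf {t | muZ a b t v = t}

/-- `t₁(M)`: the smallest value of `t₀(M')` over nonzero submodules `M' ⊆ M`. -/
def tone {Λ : Type} [Ring Λ] {n : ℕ}
    (d : (N : Type) → [AddCommGroup N] → [Module Λ N] → Fin n → ℕ)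
    (a b : ℝ → Fin n → ℝ)
    (M : Type) [AddCommGroup M] [Module Λ M] : ℝ :=
  sInf {s : ℝ | ∃ M' : Submodule Λ M, M' ≠ ⊥ ∧ s = tzero a b (d ↥M')}

theorem dprod_pos {n : ℕ} {x : Fin n → ℝ} (hx : ∀ i, 0 < x i) {v : Fin n → ℕ} (hv : v ≠ 0) :
    0 < dprod x v := by
  obtain ⟨j, hj⟩ := Function.ne_iff.mp hv
  exact Finset.sum_pos' (fun i _ => mul_nonneg (hx i).le (Nat.cast_nonneg _))
    ⟨j, Finset.mem_univ j, mul_pos (hx j) (by exact_mod_cast Nat.pos_of_ne_zero hj)⟩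

theorem differentiable_dprod {n : ℕ} {x : ℝ → Fin n → ℝ}
    (hx : ∀ i, Differentiable ℝ fun t => x t i) (v : Fin n → ℕ) :
    Differentiable ℝ fun t => dprod (x t) v :=
  Differentiable.fun_sum fun i _ => (hx i).mul_const _

theorem dprod_mul_sub {n : ℕ} (s : ℝ) (x y : Fin n → ℝ) (v : Fin n → ℕ) :
    dprod (fun i => s * x i - y i) v = s * dprod x v - dprod y v := by
  simp only [dprod, sub_mul, Finset.sum_sub_distrib, Finset.mul_sum, mul_assoc]

theorem one_sub_deriv_div_eq_of_div_eq {A B : ℝ → ℝ} {t₀ : ℝ} (hA : DifferentiableAt ℝ A t₀)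
    (hB : DifferentiableAt ℝ B t₀) (hB₀ : B t₀ ≠ 0) (hAB : A t₀ / B t₀ = t₀) :
    1 - deriv (fun t => A t / B t) t₀ = deriv (fun t => t * B t - A t) t₀ / B t₀ := by
  rw [div_eq_iff hB₀] at hAB
  have hγ : HasDerivAt (fun t => t * B t - A t) (1 * B t₀ + t₀ * deriv B t₀ - deriv A t₀) t₀ :=
    ((hasDerivAt_id' t₀).mul hB.hasDerivAt).sub hA.hasDerivAt
  rw [deriv_fun_div hA hB hB₀, hγ.deriv, hAB]
  field_simp
  ring

/-- For a nonlinear stability function `Z_t(x) = a_t·x + i b_t·x` with path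
`γ_Z(t) = t·b_t − a_t`: if `γ_Z(t₀) ∈ H(M)` (i.e. `μ_{t₀}(β) = t₀` for `β = dim M`), then
`1 − d/dt μ_t(β)|_{t₀}` and `v(t₀)·β` have the same sign, where `v = dγ_Z/dt`. In
particular the crossing is transverse iff the derivative of the slope is `≠ 1`, and green
iff it is `< 1`. -/
theorem stmt15 {n : ℕ} (a b : ℝ → Fin n → ℝ)
    (hbpos : ∀ t i, 0 < b t i)
    (hC1a : ∀ i, ContDiff ℝ 1 (fun t => a t i))
    (hC1b : ∀ i, ContDiff ℝ 1 (fun t => b t i))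
    (β : Fin n → ℕ) (hβ : β ≠ 0) (t₀ : ℝ)
    (h0 : muZ a b t₀ β = t₀) :
    (0 < 1 - deriv (fun t => muZ a b t β) t₀ ↔
      0 < deriv (fun t => dprod (fun i => t * b t i - a t i) β) t₀) ∧
    (1 - deriv (fun t => muZ a b t β) t₀ = 0 ↔
      deriv (fun t => dprod (fun i => t * b t i - a t i) β) t₀ = 0) ∧
    (1 - deriv (fun t => muZ a b t β) t₀ < 0 ↔
      deriv (fun t => dprod (fun i => t * b t i - a t i) β) t₀ < 0) := by
  have hA := differentiable_dprod (fun i => (hC1a i).differentiable one_ne_zero) β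
  have hB := differentiable_dprod (fun i => (hC1b i).differentiable one_ne_zero) β
  have hB₀ : 0 < dprod (b t₀) β := dprod_pos (hbpos t₀) hβ
  have key : 1 - deriv (fun t => muZ a b t β) t₀
      = deriv (fun t => dprod (fun i => t * b t i - a t i) β) t₀ / dprod (b t₀) β := by
    simp only [dprod_mul_sub]
    exact one_sub_deriv_div_eq_of_div_eq (hA t₀) (hB t₀) hB₀.ne' h0
  rw [key]
  exact ⟨div_pos_iff_of_pos_right hB₀, div_eq_zero_iff.trans (or_iff_left hB₀.ne'),
    by rw [div_lt_iff₀ hB₀, zero_mul]⟩
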